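/- arXiv:1407.6076 — 7 statements merged into one kernel-verified Lean document; each statement's English description precedes it below -/
import Mathlib

section
/- If X is an n×n Metzler matrix that is Hurwitz, then there exists a positive diagonal matrix Q such that Xᵀ Q + Q X is negative definite. -/
open Matrix Set Filter

noncomputable def matSpec {n : ℕ} (X : Matrix (Fin n) (Fin n) ℝ) : Set ℂ :=
  spectrum ℂ (X.map (Complex.ofReal))

def IsMetzler {n : ℕ} (X : Matrix (Fin n) (Fin n) ℝ) : Prop :=
  ∀ i j, i ≠ j → 0 ≤ X i j

def IsHurwitz {n : ℕ} (X : Matrix (Fin n) (Fin n) ℝ) : Prop :=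
  ∀ z ∈ matSpec X, z.re < 0

def MatIrreducible {n : ℕ} (X : Matrix (Fin n) (Fin n) ℝ) : Prop :=
  ∀ S : Finset (Fin n), S.Nonempty → S ≠ Finset.univ → ∃ i ∈ S, ∃ j ∉ S, X i j ≠ 0

noncomputable def spectralAbscissa {n : ℕ} (X : Matrix (Fin n) (Fin n) ℝ) : ℝ :=
  sSup (Complex.re '' matSpec X)

noncomputable def spectralRadiusR {n : ℕ} (X : Matrix (Fin n) (Fin n) ℝ) : ℝ :=
  sSup ((fun z => ‖z‖) '' matSpec X)

/-! For small `ε > 0` the matrix `B = 1 + ε X` is entrywise nonnegative and, `X` being Hurwitz,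
its spectrum lies in the open unit disc, so by Gelfand's formula the Neumann series `∑ Bᵏ`
converges. Then `d = (∑ Bᵏ) 𝟙` is a positive vector with `(1 - B) d = 𝟙`, i.e. `X d < 0`; likewise
`Xᵀ e < 0` for some `e > 0`. With `q = e / d`, the matrix `K = Xᵀ Q + Q X` is symmetric Metzler with
`K d = Xᵀ e + Q X d < 0`, and such a matrix is negative definite because
`vᵀ K v = ∑ᵢ (K d)ᵢ vᵢ² / dᵢ - ½ ∑ᵢⱼ Kᵢⱼ dᵢ dⱼ (vᵢ / dᵢ - vⱼ / dⱼ)²`. -/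

theorem summable_norm_pow_of_forall_norm_lt_one {A : Type*} [NormedRing A] [NormedAlgebra ℂ A]
    [CompleteSpace A] {a : A} (h : ∀ z ∈ spectrum ℂ a, ‖z‖ < 1) :
    Summable fun n : ℕ => ‖a ^ n‖ := by
  nontriviality A
  have hρ : spectralRadius ℂ a < 1 := by
    simpa using spectrum.spectralRadius_lt_of_forall_lt a (r := 1) (by simpa [← coe_nnnorm] using h)
  obtain ⟨r, hρr, hr1⟩ := ENNReal.lt_iff_exists_nnreal_btwn.mp hρ
  have hbound : ∀ᶠ n : ℕ in atTop, ‖‖a ^ n‖‖ ≤ (r : ℝ) ^ n := by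
    filter_upwards [(spectrum.pow_norm_pow_one_div_tendsto_nhds_spectralRadius a).eventually
      (gt_mem_nhds hρr), eventually_ne_atTop 0] with n hn hn0
    rw [ENNReal.ofReal_lt_coe_iff (by positivity), one_div] at hn
    rw [norm_norm, ← Real.rpow_inv_natCast_pow (norm_nonneg _) hn0]
    exact pow_le_pow_left₀ (by positivity) hn.le n
  exact .of_norm_bounded_eventually_nat
    (summable_geometric_of_lt_one r.2 (by exact_mod_cast hr1)) hbound

namespace Matrix

variable {ι : Type*} [Fintype ι] [DecidableEq ι]

section LinftyOp

-- Any Banach-algebra norm would do; `‖·‖∞` is one that `map Complex.ofReal` preserves.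
attribute [local instance] Matrix.linftyOpNormedRing Matrix.linftyOpNormedAlgebra

theorem linfty_opNorm_map_ofReal (B : Matrix ι ι ℝ) : ‖B.map Complex.ofReal‖ = ‖B‖ := by
  simp [linfty_opNorm_def]

theorem summable_pow_of_spectrum_map_ofReal {B : Matrix ι ι ℝ}
    (h : ∀ z ∈ spectrum ℂ (B.map Complex.ofReal), ‖z‖ < 1) : Summable (B ^ ·) := by
  refine .of_norm ?_
  have hpow (k : ℕ) : (B ^ k).map Complex.ofReal = B.map Complex.ofReal ^ k :=
    B.map_pow Complex.ofRealHom k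
  simpa only [← linfty_opNorm_map_ofReal, hpow] using summable_norm_pow_of_forall_norm_lt_one h

end LinftyOp

theorem exists_pos_one_sub_mulVec_eq_one {B : Matrix ι ι ℝ} (hB : ∀ i j, 0 ≤ B i j)
    (hs : Summable (B ^ ·)) : ∃ d : ι → ℝ, (∀ i, 0 < d i) ∧ (1 - B) *ᵥ d = 1 := by
  refine ⟨(∑' k, B ^ k) *ᵥ 1, fun i => ?_,
    by rw [mulVec_mulVec, hs.one_sub_mul_tsum_pow, one_mulVec]⟩
  have hsi : Summable fun k => (B ^ k) i := Pi.summable.mp hs i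
  have hS (j : ι) : (∑' k, B ^ k) i j = ∑' k, (B ^ k) i j :=
    (congrFun (tsum_apply hs) j).trans (tsum_apply hsi)
  have hSnn (j : ι) : 0 ≤ (∑' k, B ^ k) i j :=
    hS j ▸ tsum_nonneg fun k => pow_apply_nonneg hB k i j
  calc (0 : ℝ) < (B ^ 0) i i := by simp
    _ ≤ (∑' k, B ^ k) i i :=
      hS i ▸ (Pi.summable.mp hsi i).le_tsum 0 fun k _ => pow_apply_nonneg hB k i i
    _ ≤ ∑ j, (∑' k, B ^ k) i j := Finset.single_le_sum (fun j _ => hSnn j) (Finset.mem_univ i)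
    _ = ((∑' k, B ^ k) *ᵥ 1) i := by simp [mulVec, dotProduct]

theorem isSymm_transpose_mul_diagonal_add_diagonal_mul (X : Matrix ι ι ℝ) (q : ι → ℝ) :
    (Xᵀ * diagonal q + diagonal q * X).IsSymm := by
  simp [IsSymm, add_comm]

end Matrix

open Topology

theorem eventually_norm_one_add_mul_lt_one {z : ℂ} (hz : z.re < 0) :
    ∀ᶠ ε : ℝ in 𝓝[>] 0, ‖1 + ε * z‖ < 1 := by
  have hlim : Tendsto (fun ε : ℝ => 2 * z.re + ε * Complex.normSq z) (𝓝[>] 0) (𝓝 (2 * z.re)) :=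
    tendsto_nhdsWithin_of_tendsto_nhds
      ((continuous_const.add (continuous_id.mul continuous_const)).tendsto' _ _ (by simp))
  filter_upwards [self_mem_nhdsWithin, hlim.eventually (gt_mem_nhds (by linarith))]
    with ε (hε : 0 < ε) hneg
  have hsq : ‖1 + ε * z‖ ^ 2 = 1 + ε * (2 * z.re + ε * Complex.normSq z) := by
    rw [Complex.sq_norm, Complex.normSq_apply, Complex.normSq_apply]
    simp only [Complex.add_re, Complex.one_re, Complex.mul_re, Complex.ofReal_re,
      Complex.ofReal_im, zero_mul, sub_zero, Complex.add_im, Complex.one_im, Complex.mul_im,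
      add_zero, zero_add]
    ring
  exact (sq_lt_one_iff₀ (norm_nonneg _)).mp (by nlinarith)

theorem matSpec_one_add_smul {n : ℕ} (X : Matrix (Fin n) (Fin n) ℝ) {ε : ℝ} (hε : ε ≠ 0) :
    matSpec (1 + ε • X) = (fun z : ℂ => 1 + ε * z) '' matSpec X := by
  have hmap : (1 + ε • X).map Complex.ofReal
      = algebraMap ℂ _ 1 + Units.mk0 (ε : ℂ) (by exact_mod_cast hε) • X.map Complex.ofReal := by
    ext i j
    rcases eq_or_ne i j with rfl | hij <;> simp [*]
  unfold matSpec
  rw [hmap, ← spectrum.singleton_add_eq, spectrum.unit_smul_eq_smul]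
  ext w
  simp [Set.mem_smul_set, neg_add_eq_sub, eq_sub_iff_add_eq']

theorem IsMetzler.eventually_nonneg_one_add_smul {n : ℕ} {X : Matrix (Fin n) (Fin n) ℝ}
    (hM : IsMetzler X) : ∀ᶠ ε : ℝ in 𝓝[>] 0, ∀ i j, 0 ≤ (1 + ε • X) i j := by
  refine eventually_all.2 fun i => eventually_all.2 fun j => ?_
  rcases eq_or_ne i j with rfl | hij
  · have hlim : Tendsto (fun ε : ℝ => 1 + ε * X i i) (𝓝[>] 0) (𝓝 1) :=
      tendsto_nhdsWithin_of_tendsto_nhds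
        ((continuous_const.add (continuous_id.mul continuous_const)).tendsto' _ _ (by simp))
    filter_upwards [hlim.eventually (lt_mem_nhds one_pos)] with ε hε
    simpa using hε.le
  · filter_upwards [self_mem_nhdsWithin] with ε (hε : 0 < ε)
    simpa [hij] using mul_nonneg hε.le (hM i j hij)

theorem IsHurwitz.eventually_norm_lt_one_of_mem_matSpec {n : ℕ} {X : Matrix (Fin n) (Fin n) ℝ}
    (hH : IsHurwitz X) : ∀ᶠ ε : ℝ in 𝓝[>] 0, ∀ z ∈ matSpec (1 + ε • X), ‖z‖ < 1 := by
  filter_upwards [self_mem_nhdsWithin, (eventually_all_finite (Matrix.finite_spectrum _)).mpr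
    fun z hz => eventually_norm_one_add_mul_lt_one (hH z hz)] with ε (hε : 0 < ε) hlt
  rw [matSpec_one_add_smul X hε.ne']
  rintro _ ⟨w, hw, rfl⟩
  exact hlt w hw

theorem IsMetzler.exists_pos_mulVec_neg {n : ℕ} {X : Matrix (Fin n) (Fin n) ℝ}
    (hM : IsMetzler X) (hH : IsHurwitz X) :
    ∃ d : Fin n → ℝ, (∀ i, 0 < d i) ∧ ∀ i, (X *ᵥ d) i < 0 := by
  obtain ⟨ε, hε, hB, hspec⟩ := (eventually_mem_nhdsWithin.and
    (hM.eventually_nonneg_one_add_smul.and hH.eventually_norm_lt_one_of_mem_matSpec)).exists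
  obtain ⟨d, hd, hBd⟩ :=
    exists_pos_one_sub_mulVec_eq_one hB (summable_pow_of_spectrum_map_ofReal hspec)
  refine ⟨d, hd, fun i => ?_⟩
  have : -(ε * (X *ᵥ d) i) = 1 := by
    simpa [sub_add_cancel_left, neg_mulVec, smul_mulVec] using congrFun hBd i
  nlinarith [show (0 : ℝ) < ε from hε]

theorem IsMetzler.transpose {n : ℕ} {X : Matrix (Fin n) (Fin n) ℝ} (hM : IsMetzler X) :
    IsMetzler Xᵀ := fun i j hij => hM j i hij.symm

theorem matSpec_transpose {n : ℕ} (X : Matrix (Fin n) (Fin n) ℝ) : matSpec Xᵀ = matSpec X := by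
  ext z
  have hsub : algebraMap ℂ _ z - Xᵀ.map Complex.ofReal
      = (algebraMap ℂ (Matrix (Fin n) (Fin n) ℂ) z - X.map Complex.ofReal)ᵀ := by
    rw [transpose_sub, transpose_map, Algebra.algebraMap_eq_smul_one, transpose_smul,
      transpose_one]
  simp only [matSpec, spectrum.mem_iff, hsub, isUnit_iff_isUnit_det, det_transpose]

theorem IsHurwitz.transpose {n : ℕ} {X : Matrix (Fin n) (Fin n) ℝ} (hH : IsHurwitz X) :
    IsHurwitz Xᵀ := fun z hz => hH z (matSpec_transpose X ▸ hz)

theorem IsMetzler.transpose_mul_diagonal_add_diagonal_mul {n : ℕ} {X : Matrix (Fin n) (Fin n) ℝ}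
    (hM : IsMetzler X) {q : Fin n → ℝ} (hq : ∀ i, 0 ≤ q i) :
    IsMetzler (Xᵀ * diagonal q + diagonal q * X) := fun i j hij => by
  simpa [mul_comm] using
    add_nonneg (mul_nonneg (hq j) (hM j i hij.symm)) (mul_nonneg (hq i) (hM i j hij))

theorem IsMetzler.dotProduct_mulVec_neg {n : ℕ} {K : Matrix (Fin n) (Fin n) ℝ} (hK : IsMetzler K)
    (hsymm : K.IsSymm) {d : Fin n → ℝ} (hd : ∀ i, 0 < d i) (hKd : ∀ i, (K *ᵥ d) i < 0)
    {v : Fin n → ℝ} (hv : v ≠ 0) : v ⬝ᵥ (K *ᵥ v) < 0 := by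
  set w : Fin n → Fin n → ℝ := fun i j => K i j * d j * v i ^ 2 / (2 * d i)
  have hterm (i j : Fin n) : v i * K i j * v j ≤ w i j + w j i := by
    have hgap : w i j + w j i - v i * K i j * v j
        = K i j * (d j * v i - d i * v j) ^ 2 / (2 * d i * d j) := by
      simp only [w, hsymm.apply i j]
      field_simp [(hd i).ne', (hd j).ne']
      ring
    have : 0 ≤ K i j * (d j * v i - d i * v j) ^ 2 / (2 * d i * d j) := by
      rcases eq_or_ne i j with rfl | hij
      · simp [mul_comm]
      · have := hd i; have := hd j; have := hK i j hij
        positivity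
    linarith
  have hsum : ∑ i, ∑ j, (w i j + w j i) = ∑ i, v i ^ 2 / d i * (K *ᵥ d) i := by
    simp only [Finset.sum_add_distrib]
    rw [Finset.sum_comm (f := fun i j => w j i), ← two_mul, Finset.mul_sum]
    refine Finset.sum_congr rfl fun i _ => ?_
    simp only [w, mulVec, dotProduct, Finset.mul_sum]
    refine Finset.sum_congr rfl fun j _ => ?_
    field_simp [(hd i).ne']
  obtain ⟨i₀, hi₀⟩ := Function.ne_iff.mp hv
  have hneg : ∑ i, v i ^ 2 / d i * (K *ᵥ d) i < 0 := by
    refine Finset.sum_neg' (fun i _ => mul_nonpos_of_nonneg_of_nonpos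
      (div_nonneg (sq_nonneg _) (hd i).le) (hKd i).le) ⟨i₀, Finset.mem_univ _, ?_⟩
    exact mul_neg_of_pos_of_neg (div_pos (pow_two_pos_of_ne_zero hi₀) (hd i₀)) (hKd i₀)
  calc v ⬝ᵥ (K *ᵥ v) = ∑ i, ∑ j, v i * K i j * v j := by
        simp [dotProduct, mulVec, Finset.mul_sum, mul_assoc]
    _ ≤ ∑ i, ∑ j, (w i j + w j i) :=
      Finset.sum_le_sum fun i _ => Finset.sum_le_sum fun j _ => hterm i j
    _ = ∑ i, v i ^ 2 / d i * (K *ᵥ d) i := hsum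
    _ < 0 := hneg

theorem stmt1 {n : ℕ} (X : Matrix (Fin n) (Fin n) ℝ) (hM : IsMetzler X)
    (hH : IsHurwitz X) :
    ∃ q : Fin n → ℝ, (∀ i, 0 < q i) ∧
      ∀ v : Fin n → ℝ, v ≠ 0 →
        v ⬝ᵥ ((Xᵀ * Matrix.diagonal q + Matrix.diagonal q * X) *ᵥ v) < 0 := by
  obtain ⟨d, hd, hXd⟩ := hM.exists_pos_mulVec_neg hH
  obtain ⟨e, he, hXe⟩ := hM.transpose.exists_pos_mulVec_neg hH.transpose
  set q : Fin n → ℝ := fun i => e i / d i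
  have hq (i : Fin n) : 0 < q i := div_pos (he i) (hd i)
  have hqd : diagonal q *ᵥ d = e := funext fun i => by
    simp [q, mulVec_diagonal, (hd i).ne']
  refine ⟨q, hq, fun v hv => (hM.transpose_mul_diagonal_add_diagonal_mul fun i => (hq i).le)
    |>.dotProduct_mulVec_neg (isSymm_transpose_mul_diagonal_add_diagonal_mul X q) hd
      (fun i => ?_) hv⟩
  rw [add_mulVec, ← mulVec_mulVec, ← mulVec_mulVec, hqd, Pi.add_apply, mulVec_diagonal]
  exact add_neg (hXe i) (mul_neg_of_pos_of_neg (hq i) (hXd i))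
end

section
/- Let X be an n×n irreducible Metzler matrix and suppose there exists a strictly positive vector v with Xv ≺ 0 (i.e., Xv ⪯ 0 componentwise and Xv ≠ 0). Then the spectral abscissa of X is strictly negative, i.e., X is Hurwitz. -/
open Matrix Set Filter

/-!
If `X w = z w` with `w ≠ 0` and `Re z ≥ 0`, the triangle inequality and the Metzler sign pattern
give `X u ≥ (Re z) u ≥ 0` for `u = |w|`. Scale `v` until `c v` touches `u` from above: then
`y = c v - u ≥ 0` has a zero entry and `X y ≤ 0`. At a zero of `y` the corresponding row of `X y`
is a sum of nonnegative off-diagonal terms, so the zero set of `y` is closed under the nonzero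
entries of `X`, and by irreducibility `y = 0`. Hence `u = c v` and `0 ≤ X u = c X v ≤ 0`, which
forces `X v = 0`.
-/

theorem exists_mulVec_eq_smul_of_mem_matSpec {n : ℕ} {X : Matrix (Fin n) (Fin n) ℝ} {z : ℂ}
    (hz : z ∈ matSpec X) : ∃ w : Fin n → ℂ, w ≠ 0 ∧ X.map Complex.ofReal *ᵥ w = z • w := by
  rw [matSpec, ← Matrix.spectrum_toLin', ← Module.End.hasEigenvalue_iff_mem_spectrum] at hz
  obtain ⟨w, hw⟩ := hz.exists_hasEigenvector
  exact ⟨w, hw.2, by simpa using Module.End.mem_eigenspace_iff.mp hw.1⟩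

theorem IsMetzler.re_smul_norm_le_mulVec_norm {n : ℕ} {X : Matrix (Fin n) (Fin n) ℝ}
    (hM : IsMetzler X) {z : ℂ} {w : Fin n → ℂ} (hw : X.map Complex.ofReal *ᵥ w = z • w) :
    z.re • (fun i => ‖w i‖) ≤ X *ᵥ fun i => ‖w i‖ := by
  intro i
  have hrow : (z - X i i) * w i = ∑ j ∈ Finset.univ.erase i, (X i j : ℂ) * w j := by
    have := congrFun hw i
    simp only [mulVec, dotProduct, map_apply, Pi.smul_apply, smul_eq_mul,
      ← Finset.add_sum_erase _ _ (Finset.mem_univ i)] at this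
    linear_combination -this
  have hnorm : ‖(z - X i i) * w i‖ ≤ ∑ j ∈ Finset.univ.erase i, X i j * ‖w j‖ := by
    rw [hrow]
    refine (norm_sum_le _ _).trans_eq (Finset.sum_congr rfl fun j hj => ?_)
    rw [norm_mul, Complex.norm_real, Real.norm_of_nonneg (hM i j (Finset.ne_of_mem_erase hj).symm)]
  have hre : (z.re - X i i) * ‖w i‖ ≤ ‖(z - X i i) * w i‖ := by
    rw [norm_mul]
    gcongr
    simpa using Complex.re_le_norm (z - X i i)
  simp only [Pi.smul_apply, smul_eq_mul, mulVec, dotProduct,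
    ← Finset.add_sum_erase _ _ (Finset.mem_univ i)]
  linarith

theorem MatIrreducible.eq_univ_of_closed {n : ℕ} {X : Matrix (Fin n) (Fin n) ℝ}
    (hI : MatIrreducible X) {S : Finset (Fin n)} (hS : S.Nonempty)
    (hclosed : ∀ i ∈ S, ∀ j, X i j ≠ 0 → j ∈ S) : S = Finset.univ := by
  by_contra hne
  obtain ⟨i, hi, j, hj, hij⟩ := hI S hS hne
  exact hj (hclosed i hi j hij)

theorem IsMetzler.eq_zero_of_nonneg_of_mulVec_nonpos {n : ℕ} {X : Matrix (Fin n) (Fin n) ℝ}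
    (hM : IsMetzler X) (hI : MatIrreducible X) {y : Fin n → ℝ} (hy : 0 ≤ y)
    (hXy : X *ᵥ y ≤ 0) {i₀ : Fin n} (hi₀ : y i₀ = 0) : y = 0 := by
  set S := Finset.univ.filter fun i => y i = 0
  suffices S = Finset.univ by ext i; simpa [S] using Finset.eq_univ_iff_forall.mp this i
  refine hI.eq_univ_of_closed ⟨i₀, by simp [S, hi₀]⟩ fun i hi j hij => ?_
  have hyi : y i = 0 := by simpa [S] using hi
  have hterm : ∀ k ∈ Finset.univ.erase i, 0 ≤ X i k * y k := fun k hk =>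
    mul_nonneg (hM i k (Finset.ne_of_mem_erase hk).symm) (hy k)
  have hsum : ∑ k ∈ Finset.univ.erase i, X i k * y k = 0 := by
    have := hXy i
    simp only [mulVec, dotProduct, ← Finset.add_sum_erase _ _ (Finset.mem_univ i), hyi,
      mul_zero, zero_add, Pi.zero_apply] at this
    exact le_antisymm this (Finset.sum_nonneg hterm)
  rcases eq_or_ne j i with rfl | hji
  · exact hi
  have := (Finset.sum_eq_zero_iff_of_nonneg hterm).mp hsum j (by simp [hji])
  simpa [S] using (mul_eq_zero.mp this).resolve_left hij

theorem exists_le_smul_eq_mul_of_pos {ι : Type*} [Finite ι] [Nonempty ι] (u : ι → ℝ) {v : ι → ℝ}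
    (hv : ∀ i, 0 < v i) : ∃ c : ℝ, ∃ i, u ≤ c • v ∧ u i = c * v i := by
  obtain ⟨i, hi⟩ := Finite.exists_max fun i => u i / v i
  refine ⟨u i / v i, i, fun j => ?_, (div_mul_cancel₀ _ (hv i).ne').symm⟩
  exact (div_le_iff₀ (hv j)).mp (hi j)

theorem stmt5 {n : ℕ} (X : Matrix (Fin n) (Fin n) ℝ) (hM : IsMetzler X)
    (hI : MatIrreducible X) (v : Fin n → ℝ) (hv : ∀ i, 0 < v i)
    (hXv1 : ∀ i, (X *ᵥ v) i ≤ 0) (hXv2 : X *ᵥ v ≠ 0) :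
    IsHurwitz X := by
  intro z hz
  by_contra! hre
  obtain ⟨w, hw0, hw⟩ := exists_mulVec_eq_smul_of_mem_matSpec hz
  set u : Fin n → ℝ := fun i => ‖w i‖
  have hu0 : 0 ≤ u := fun i => norm_nonneg (w i)
  have hu_ne : u ≠ 0 := fun h => hw0 (funext fun i => norm_eq_zero.mp (congrFun h i))
  have hXu : 0 ≤ X *ᵥ u := (smul_nonneg hre hu0).trans (hM.re_smul_norm_le_mulVec_norm hw)
  have : Nonempty (Fin n) := (Function.ne_iff.mp hw0).nonempty
  obtain ⟨c, i, hle, hi⟩ := exists_le_smul_eq_mul_of_pos u hv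
  have hc : 0 ≤ c := (mul_nonneg_iff_of_pos_right (hv i)).mp (hi ▸ hu0 i)
  have hXcv : c • X *ᵥ v ≤ 0 := smul_nonpos_of_nonneg_of_nonpos hc hXv1
  have hXy : X *ᵥ (c • v - u) ≤ 0 := by
    rw [mulVec_sub, mulVec_smul, sub_nonpos]
    exact hXcv.trans hXu
  have hu : u = c • v := (sub_eq_zero.mp <|
    hM.eq_zero_of_nonneg_of_mulVec_nonpos hI (sub_nonneg.mpr hle) hXy (i₀ := i) (by simp [hi])).symm
  have hc0 : 0 < c := hc.lt_of_ne' fun h => hu_ne (by simp [hu, h])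
  refine hXv2 (le_antisymm hXv1 fun j => ?_)
  have : 0 ≤ c * (X *ᵥ v) j := by simpa [hu, mulVec_smul] using hXu j
  exact (mul_nonneg_iff_of_pos_left hc0).mp this
end

section
/- Let X ∈ ℝ^{n×n} be nonnegative and y ∈ ℝⁿ with 0 ⪯ y ≪ 1. Define T_i(p) = ((Xp)_i + y_i)/(1 + (Xp)_i) on [0,1]ⁿ. If T has a fixed point with all components strictly positive, then T has at most one such strictly positive fixed point. -/
open Matrix Set Filter

/-
Let `η = max_i p_i / q_i`, attained at `i₀`, and suppose `η > 1`. Since `X ≥ 0` and `p ≤ η q`,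
`(Xp)_{i₀} ≤ η (Xq)_{i₀}`. The scalar map `f(x) = (x + y)/(1 + x)` is nondecreasing for `y ≤ 1` and
strictly subhomogeneous, `f(η t) < η f(t)` for `η > 1` and `f(t) > 0`. Hence
`η q_{i₀} = p_{i₀} = f((Xp)_{i₀}) ≤ f(η (Xq)_{i₀}) < η f((Xq)_{i₀}) = η q_{i₀}`, a contradiction.
So `p ≤ q`, and by symmetry `p = q`.
-/

lemma mulVec_le_mulVec_of_nonneg {m n : Type*} [Fintype n] {X : Matrix m n ℝ}
    (hX : ∀ i j, 0 ≤ X i j) {u v : n → ℝ} (huv : u ≤ v) : X *ᵥ u ≤ X *ᵥ v := fun i =>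
  Finset.sum_le_sum fun j _ => mul_le_mul_of_nonneg_left (huv j) (hX i j)

lemma mulVec_nonneg_of_nonneg {m n : Type*} [Fintype n] {X : Matrix m n ℝ}
    (hX : ∀ i j, 0 ≤ X i j) {u : n → ℝ} (hu : 0 ≤ u) : 0 ≤ X *ᵥ u := by
  simpa using mulVec_le_mulVec_of_nonneg hX hu

lemma add_div_one_add_le_add_div_one_add {a b y : ℝ} (ha : 0 ≤ a) (hab : a ≤ b) (hy : y ≤ 1) :
    (a + y) / (1 + a) ≤ (b + y) / (1 + b) := by
  rw [div_le_div_iff₀ (by linarith) (by linarith)]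
  nlinarith [mul_nonneg (sub_nonneg.2 hab) (sub_nonneg.2 hy)]

lemma add_div_one_add_smul_lt {η t y : ℝ} (hη : 1 < η) (ht : 0 ≤ t) (hy : 0 ≤ y)
    (hty : 0 < t + y) : (η * t + y) / (1 + η * t) < η * ((t + y) / (1 + t)) := by
  rw [mul_div_assoc', div_lt_div_iff₀ (by positivity) (by linarith)]
  -- the difference of the two sides factors as `(η - 1) (η t² + y + (η + 1) t y)`
  have hpos : 0 < η * t ^ 2 + y + (η + 1) * t * y := by
    rcases ht.eq_or_lt with rfl | ht'
    · simpa using hty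
    · have : 0 ≤ (η + 1) * t * y := by positivity
      nlinarith [mul_pos (by linarith : (0 : ℝ) < η) (pow_pos ht' 2)]
  nlinarith [mul_pos (sub_pos.2 hη) hpos]

lemma le_of_isFixedPt {n : Type*} [Fintype n] {X : Matrix n n ℝ} (hX : ∀ i j, 0 ≤ X i j)
    {y : n → ℝ} (hy₀ : 0 ≤ y) (hy₁ : y ≤ 1) {p q : n → ℝ} (hp : 0 ≤ p) (hq : ∀ i, 0 < q i)
    (hfp : ∀ i, ((X *ᵥ p) i + y i) / (1 + (X *ᵥ p) i) = p i)
    (hfq : ∀ i, ((X *ᵥ q) i + y i) / (1 + (X *ᵥ q) i) = q i) :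
    p ≤ q := by
  intro i
  have : Nonempty n := ⟨i⟩
  obtain ⟨i₀, hi₀⟩ := Finite.exists_max fun j => p j / q j
  set η := p i₀ / q i₀
  have hpη : p ≤ η • q := fun j => (div_le_iff₀ (hq j)).mp (hi₀ j)
  suffices hη : η ≤ 1 from (hpη i).trans (mul_le_of_le_one_left (hq i).le hη)
  by_contra! hη
  set t := (X *ᵥ q) i₀
  have ht : 0 ≤ t := mulVec_nonneg_of_nonneg hX (fun j => (hq j).le) i₀
  have hst : (X *ᵥ p) i₀ ≤ η * t := by
    simpa [mulVec_smul] using mulVec_le_mulVec_of_nonneg hX hpη i₀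
  have hty : 0 < t + y i₀ := by
    rw [← div_pos_iff_of_pos_right (by linarith : (0 : ℝ) < 1 + t), hfq]
    exact hq i₀
  have := calc
    η * q i₀ = p i₀ := div_mul_cancel₀ _ (hq i₀).ne'
    _ = ((X *ᵥ p) i₀ + y i₀) / (1 + (X *ᵥ p) i₀) := (hfp i₀).symm
    _ ≤ (η * t + y i₀) / (1 + η * t) :=
      add_div_one_add_le_add_div_one_add (mulVec_nonneg_of_nonneg hX hp i₀) hst (hy₁ i₀)
    _ < η * ((t + y i₀) / (1 + t)) := add_div_one_add_smul_lt hη ht (hy₀ i₀) hty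
    _ = η * q i₀ := by rw [hfq]
  exact this.false

theorem stmt7 {n : ℕ} (X : Matrix (Fin n) (Fin n) ℝ) (hX : ∀ i j, 0 ≤ X i j)
    (y : Fin n → ℝ) (hy : ∀ i, 0 ≤ y i ∧ y i < 1)
    (p q : Fin n → ℝ)
    (hp : ∀ i, 0 < p i ∧ p i ≤ 1) (hq : ∀ i, 0 < q i ∧ q i ≤ 1)
    (hfp : ∀ i, ((X *ᵥ p) i + y i) / (1 + (X *ᵥ p) i) = p i)
    (hfq : ∀ i, ((X *ᵥ q) i + y i) / (1 + (X *ᵥ q) i) = q i) :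
    p = q := by
  have hy₀ : 0 ≤ y := fun i => (hy i).1
  have hy₁ : y ≤ 1 := fun i => (hy i).2.le
  exact le_antisymm
    (le_of_isFixedPt hX hy₀ hy₁ (fun i => (hp i).1.le) (fun i => (hq i).1) hfp hfq)
    (le_of_isFixedPt hX hy₀ hy₁ (fun i => (hq i).1.le) (fun i => (hp i).1) hfq hfp)
end

section
/- Consider the SIS dynamics ṗ = (AᵀB − D)p − diag(p) AᵀB p on ℝⁿ, where A has nonnegative entries and B, D are positive diagonal matrices. If p(0) ∈ [0,1]ⁿ, then p(t) ∈ [0,1]ⁿ for all t ≥ 0, i.e., the cube [0,1]ⁿ is forward invariant. -/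
open Matrix Set Filter

/-! The ℓ¹ distance of `p(t)` to the cube, `Σᵢ ((-pᵢ)⁺ + (pᵢ - 1)⁺)`, vanishes at `t = 0`. On a
compact time interval `p` is bounded, and there the right derivative of this distance is at most a
constant times the distance itself: at a coordinate below `0` (resp. above `1`) the only term that
can push it further out is `(1 - pᵢ) Σⱼ aⱼᵢ βⱼ pⱼ`, which is controlled by the negative parts of the
`pⱼ`. Grönwall's inequality then keeps the distance at `0`. -/

theorem le_zero_of_hasDerivWithinAt_Ici_le_mul {f : ℝ → ℝ} {K a b : ℝ}
    (hf : ContinuousOn f (Icc a b))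
    (hf' : ∀ x ∈ Ico a b, ∃ d ≤ K * f x, HasDerivWithinAt f d (Ici x) x) (ha : f a ≤ 0) :
    ∀ x ∈ Icc a b, f x ≤ 0 := by
  intro x hx
  calc f x ≤ gronwallBound 0 K 0 (x - a) :=
        le_gronwallBound_of_liminf_deriv_right_le (f' := fun x => K * f x) hf
          (fun x hx r hr => by
            obtain ⟨d, hd, hder⟩ := hf' x hx
            simpa only [slope_def_field, div_eq_inv_mul] using
              hder.liminf_right_slope_le (hd.trans_lt hr))
          ha (fun x _ => (add_zero _).ge) x hx
    _ = 0 := gronwallBound_ε0_δ0 K _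

theorem exists_hasDerivWithinAt_sum_le {ι : Type*} {u : Finset ι} {f : ι → ℝ → ℝ} {b : ι → ℝ}
    {s : Set ℝ} {t : ℝ} (h : ∀ i ∈ u, ∃ d ≤ b i, HasDerivWithinAt (f i) d s t) :
    ∃ d ≤ ∑ i ∈ u, b i, HasDerivWithinAt (fun x => ∑ i ∈ u, f i x) d s t := by
  choose! d hd hder using h
  exact ⟨∑ i ∈ u, d i, Finset.sum_le_sum hd, HasDerivWithinAt.fun_sum hder⟩

theorem HasDerivAt.exists_hasDerivWithinAt_Ici_max_zero_le {g : ℝ → ℝ} {g' B t : ℝ}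
    (hg : HasDerivAt g g' t) (hB : 0 ≤ B) (hg' : 0 ≤ g t → g' ≤ B) :
    ∃ d ≤ B, HasDerivWithinAt (fun s => max (g s) 0) d (Ici t) t := by
  rcases lt_trichotomy (g t) 0 with hneg | hzero | hpos
  · refine ⟨0, hB, ?_⟩
    have hev : (fun s => max (g s) 0) =ᶠ[nhds t] fun _ => 0 := by
      filter_upwards [hg.continuousAt.eventually_lt_const hneg] with s hs
      exact max_eq_right hs.le
    exact ((hasDerivAt_const t 0).congr_of_eventuallyEq hev).hasDerivWithinAt
  · refine ⟨max g' 0, max_le (hg' hzero.ge) hB, ?_⟩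
    -- `|a⁺ - b⁺| ≤ |a - b|` transfers the little-o remainder of `g` to `g⁺`.
    have hO : (fun s => max (g s) 0 - max (g t) 0 - (s - t) • max g' 0)
        =O[nhdsWithin t (Ici t)] fun s => g s - g t - (s - t) • g' := by
      refine Asymptotics.isBigO_iff.2 ⟨1, ?_⟩
      filter_upwards [self_mem_nhdsWithin] with s hs
      have hscale : (s - t) • max g' 0 = max ((s - t) * g') 0 := by
        rw [smul_eq_mul, mul_max_of_nonneg _ _ (sub_nonneg.2 hs), mul_zero]
      rw [hzero, hscale, one_mul, smul_eq_mul]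
      simpa only [max_self, sub_zero, Real.norm_eq_abs] using abs_max_sub_max_le_abs _ _ _
    exact hasDerivWithinAt_iff_isLittleO.2
      (hO.trans_isLittleO (hasDerivWithinAt_iff_isLittleO.1 hg.hasDerivWithinAt))
  · refine ⟨g', hg' hpos.le, ?_⟩
    have hev : (fun s => max (g s) 0) =ᶠ[nhds t] g := by
      filter_upwards [hg.continuousAt.eventually_const_lt hpos] with s hs
      exact max_eq_left hs.le
    exact (hg.congr_of_eventuallyEq hev).hasDerivWithinAt

section SIS

variable {ι : Type*} [Fintype ι]

def cubeExcess (x : ι → ℝ) : ℝ :=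
  ∑ i, (max (-x i) 0 + max (x i - 1) 0)

theorem continuous_cubeExcess : Continuous (cubeExcess (ι := ι)) := by
  unfold cubeExcess
  fun_prop

theorem cubeExcess_nonneg (x : ι → ℝ) : 0 ≤ cubeExcess x :=
  Finset.sum_nonneg fun _ _ => add_nonneg (le_max_right _ _) (le_max_right _ _)

theorem neg_cubeExcess_le (x : ι → ℝ) (i : ι) : -cubeExcess x ≤ x i := by
  refine neg_le.1 ?_
  calc -x i ≤ max (-x i) 0 + max (x i - 1) 0 :=
        le_add_of_le_of_nonneg (le_max_left _ _) (le_max_right _ _)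
    _ ≤ cubeExcess x := Finset.single_le_sum (f := fun j => max (-x j) 0 + max (x j - 1) 0)
          (fun _ _ => add_nonneg (le_max_right _ _) (le_max_right _ _)) (Finset.mem_univ i)

theorem cubeExcess_nonpos_iff {x : ι → ℝ} : cubeExcess x ≤ 0 ↔ ∀ i, x i ∈ Icc 0 1 := by
  have hterm : ∀ i, 0 ≤ max (-x i) 0 + max (x i - 1) 0 := fun i =>
    add_nonneg (le_max_right _ _) (le_max_right _ _)
  rw [(cubeExcess_nonneg x).ge_iff_eq', cubeExcess,
    Finset.sum_eq_zero_iff_of_nonneg fun i _ => hterm i]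
  refine forall_congr' fun i => ?_
  rw [add_eq_zero_iff_of_nonneg (le_max_right _ _) (le_max_right _ _), max_eq_right_iff,
    max_eq_right_iff, Set.mem_Icc, imp_iff_right (Finset.mem_univ i)]
  constructor <;> rintro ⟨h₁, h₂⟩ <;> constructor <;> linarith

variable [DecidableEq ι]

def sisField (A : Matrix ι ι ℝ) (β δ x : ι → ℝ) (i : ι) : ℝ :=
  -(δ i) * x i + (1 - x i) * ∑ j ∈ Finset.univ.filter (fun j => j ≠ i), A j i * β j * x j

def sisRateBound (A : Matrix ι ι ℝ) (β : ι → ℝ) : ℝ :=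
  ∑ i, ∑ j ∈ Finset.univ.filter (fun j => j ≠ i), A j i * β j

theorem sisRateBound_nonneg {A : Matrix ι ι ℝ} (hA : ∀ i j, 0 ≤ A i j) {β : ι → ℝ}
    (hβ : ∀ i, 0 ≤ β i) : 0 ≤ sisRateBound A β :=
  Finset.sum_nonneg fun _ _ => Finset.sum_nonneg fun j _ => mul_nonneg (hA _ _) (hβ j)

theorem neg_sisRateBound_mul_cubeExcess_le {A : Matrix ι ι ℝ} (hA : ∀ i j, 0 ≤ A i j)
    {β : ι → ℝ} (hβ : ∀ i, 0 ≤ β i) (x : ι → ℝ) (i : ι) :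
    -(sisRateBound A β * cubeExcess x) ≤
      ∑ j ∈ Finset.univ.filter (fun j => j ≠ i), A j i * β j * x j := by
  have hw : ∀ i j, 0 ≤ A j i * β j := fun i j => mul_nonneg (hA j i) (hβ j)
  have hrow : ∑ j ∈ Finset.univ.filter (fun j => j ≠ i), A j i * β j ≤ sisRateBound A β :=
    Finset.single_le_sum (f := fun i => ∑ j ∈ Finset.univ.filter (fun j => j ≠ i), A j i * β j)
      (fun i _ => Finset.sum_nonneg fun j _ => hw i j) (Finset.mem_univ i)
  calc -(sisRateBound A β * cubeExcess x)
      ≤ -((∑ j ∈ Finset.univ.filter (fun j => j ≠ i), A j i * β j) * cubeExcess x) :=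
        neg_le_neg (mul_le_mul_of_nonneg_right hrow (cubeExcess_nonneg x))
    _ = ∑ j ∈ Finset.univ.filter (fun j => j ≠ i), A j i * β j * -cubeExcess x := by
        rw [← Finset.sum_mul, mul_neg]
    _ ≤ ∑ j ∈ Finset.univ.filter (fun j => j ≠ i), A j i * β j * x j :=
        Finset.sum_le_sum fun j _ => mul_le_mul_of_nonneg_left (neg_cubeExcess_le x j) (hw i j)

theorem neg_sisField_le {A : Matrix ι ι ℝ} (hA : ∀ i j, 0 ≤ A i j) {β δ : ι → ℝ}
    (hβ : ∀ i, 0 ≤ β i) (hδ : ∀ i, 0 ≤ δ i) {x : ι → ℝ} {i : ι} {M : ℝ} (hx : x i ≤ 0)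
    (hM : |x i| ≤ M) : -sisField A β δ x i ≤ (1 + M) * (sisRateBound A β * cubeExcess x) := by
  have hS := neg_sisRateBound_mul_cubeExcess_le hA hβ x i
  have hCe := mul_nonneg (sisRateBound_nonneg hA hβ) (cubeExcess_nonneg x)
  have hxM : -x i ≤ M := (neg_le_abs _).trans hM
  unfold sisField
  nlinarith [mul_nonneg (sub_nonneg.2 (hx.trans zero_le_one)) (neg_le_iff_add_nonneg.1 hS),
    mul_nonneg (neg_le_iff_add_nonneg.1 hxM) hCe, mul_nonpos_of_nonneg_of_nonpos (hδ i) hx]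

theorem sisField_le {A : Matrix ι ι ℝ} (hA : ∀ i j, 0 ≤ A i j) {β δ : ι → ℝ}
    (hβ : ∀ i, 0 ≤ β i) (hδ : ∀ i, 0 ≤ δ i) {x : ι → ℝ} {i : ι} {M : ℝ} (hx : 1 ≤ x i)
    (hM : |x i| ≤ M) : sisField A β δ x i ≤ (1 + M) * (sisRateBound A β * cubeExcess x) := by
  have hS := neg_sisRateBound_mul_cubeExcess_le hA hβ x i
  have hCe := mul_nonneg (sisRateBound_nonneg hA hβ) (cubeExcess_nonneg x)
  have hxM : x i ≤ M := (le_abs_self _).trans hM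
  unfold sisField
  nlinarith [mul_nonneg (sub_nonneg.2 hx) (neg_le_iff_add_nonneg.1 hS),
    mul_nonneg (sub_nonneg.2 hxM) hCe, mul_nonneg (hδ i) (zero_le_one.trans hx)]

theorem exists_hasDerivWithinAt_cubeExcess_le {A : Matrix ι ι ℝ} (hA : ∀ i j, 0 ≤ A i j)
    {β δ : ι → ℝ} (hβ : ∀ i, 0 ≤ β i) (hδ : ∀ i, 0 ≤ δ i) {p : ℝ → ι → ℝ} {t M : ℝ}
    (hode : ∀ i, HasDerivAt (fun s => p s i) (sisField A β δ (p t) i) t)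
    (hM : ∀ i, |p t i| ≤ M) :
    ∃ d ≤ 2 * Fintype.card ι * (1 + M) * sisRateBound A β * cubeExcess (p t),
      HasDerivWithinAt (fun s => cubeExcess (p s)) d (Ici t) t := by
  set B := (1 + M) * (sisRateBound A β * cubeExcess (p t))
  have hterm : ∀ i, ∃ d ≤ 2 * B,
      HasDerivWithinAt (fun s => max (-p s i) 0 + max (p s i - 1) 0) d (Ici t) t := by
    intro i
    have hB : 0 ≤ B := mul_nonneg (by linarith [(abs_nonneg _).trans (hM i)])
      (mul_nonneg (sisRateBound_nonneg hA hβ) (cubeExcess_nonneg _))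
    obtain ⟨d₁, hd₁, hder₁⟩ := (hode i).neg.exists_hasDerivWithinAt_Ici_max_zero_le hB
      fun h => neg_sisField_le hA hβ hδ (neg_nonneg.1 h) (hM i)
    obtain ⟨d₂, hd₂, hder₂⟩ := ((hode i).sub_const 1).exists_hasDerivWithinAt_Ici_max_zero_le hB
      fun h => sisField_le hA hβ hδ (sub_nonneg.1 h) (hM i)
    exact ⟨d₁ + d₂, by linarith, hder₁.add hder₂⟩
  obtain ⟨d, hd, hder⟩ := exists_hasDerivWithinAt_sum_le fun i (_ : i ∈ Finset.univ) => hterm i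
  refine ⟨d, hd.trans_eq ?_, hder⟩
  rw [Finset.sum_const, Finset.card_univ, nsmul_eq_mul]
  ring

end SIS

theorem stmt9 {n : ℕ} (A : Matrix (Fin n) (Fin n) ℝ) (hA : ∀ i j, 0 ≤ A i j)
    (β δ : Fin n → ℝ) (hβ : ∀ i, 0 < β i) (hδ : ∀ i, 0 < δ i)
    (p : ℝ → Fin n → ℝ)
    (hode : ∀ i t, HasDerivAt (fun s => p s i)
      (-(δ i) * p t i +
        (1 - p t i) * ∑ j ∈ Finset.univ.filter (fun j => j ≠ i), A j i * β j * p t j) t)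
    (h0 : ∀ i, p 0 i ∈ Set.Icc (0:ℝ) 1) :
    ∀ t ≥ (0:ℝ), ∀ i, p t i ∈ Set.Icc (0:ℝ) 1 := by
  intro t ht
  have hp : Continuous p :=
    continuous_pi fun i => continuous_iff_continuousAt.2 fun s => (hode i s).continuousAt
  obtain ⟨M, hM⟩ := isCompact_Icc.exists_bound_of_continuousOn (hp.continuousOn (s := Icc 0 t))
  have hderiv : ∀ s ∈ Ico 0 t,
      ∃ d ≤ 2 * Fintype.card (Fin n) * (1 + M) * sisRateBound A β * cubeExcess (p s),
        HasDerivWithinAt (fun s => cubeExcess (p s)) d (Ici s) s := fun s hs =>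
    exists_hasDerivWithinAt_cubeExcess_le hA (fun i => (hβ i).le) (fun i => (hδ i).le)
      (fun i => hode i s)
      fun i => (norm_le_pi_norm (p s) i).trans (hM s (Ico_subset_Icc_self hs))
  exact cubeExcess_nonpos_iff.1 <|
    le_zero_of_hasDerivWithinAt_Ici_le_mul (continuous_cubeExcess.comp hp).continuousOn hderiv
      (cubeExcess_nonpos_iff.2 h0) t ⟨ht, le_rfl⟩
end

section
/- Let G be a strongly connected digraph with adjacency matrix A, and consider an equilibrium p* ∈ [0,1)ⁿ of the SIS dynamics, so that p*_i = ξ*_i/(δ_i + ξ*_i) with ξ*_i = Σ_{j≠i} a_{ji}β_j p*_j. If p*_k > 0 for some node k, then p*_i > 0 for every node i. -/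
open Matrix Set Filter

section SISEquilibrium

variable {ι : Type*} [Fintype ι] [DecidableEq ι] {A : Matrix ι ι ℝ} {β p : ι → ℝ}

theorem sum_offDiag_weighted_pos_of_edge (hA : ∀ i j, 0 ≤ A i j) (hβ : ∀ i, 0 < β i)
    (hp : ∀ i, 0 ≤ p i) {a b : ι} (hne : a ≠ b) (hab : A a b ≠ 0) (ha : 0 < p a) :
    0 < ∑ j ∈ Finset.univ.filter (fun j => j ≠ b), A j b * β j * p j := by
  have hterm_nonneg : ∀ j, 0 ≤ A j b * β j * p j := fun j =>
    mul_nonneg (mul_nonneg (hA j b) (hβ j).le) (hp j)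
  have hterm_pos : 0 < A a b * β a * p a :=
    mul_pos (mul_pos ((hA a b).lt_of_ne (Ne.symm hab)) (hβ a)) ha
  exact Finset.sum_pos' (fun j _ => hterm_nonneg j) ⟨a, by simpa using hne, hterm_pos⟩

theorem sis_equilibrium_pos_of_edge (hA : ∀ i j, 0 ≤ A i j) (hβ : ∀ i, 0 < β i)
    {δ ξ : ι → ℝ} (hδ : ∀ i, 0 < δ i) (hp : ∀ i, 0 ≤ p i)
    (hξ : ∀ i, ξ i = ∑ j ∈ Finset.univ.filter (fun j => j ≠ i), A j i * β j * p j)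
    (heq : ∀ i, p i = ξ i / (δ i + ξ i)) {a b : ι} (hab : A a b ≠ 0) (ha : 0 < p a) :
    0 < p b := by
  rcases eq_or_ne a b with rfl | hne
  · exact ha
  have hξb : 0 < ξ b := hξ b ▸ sum_offDiag_weighted_pos_of_edge hA hβ hp hne hab ha
  rw [heq b]
  exact div_pos hξb (add_pos (hδ b) hξb)

end SISEquilibrium

theorem stmt16 {n : ℕ} (A : Matrix (Fin n) (Fin n) ℝ) (hA : ∀ i j, 0 ≤ A i j)
    (hconn : ∀ i j, Relation.ReflTransGen (fun a b => A a b ≠ 0) i j)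
    (β δ : Fin n → ℝ) (hβ : ∀ i, 0 < β i) (hδ : ∀ i, 0 < δ i)
    (p : Fin n → ℝ) (hp : ∀ i, 0 ≤ p i ∧ p i < 1)
    (ξ : Fin n → ℝ)
    (hξ : ∀ i, ξ i = ∑ j ∈ Finset.univ.filter (fun j => j ≠ i), A j i * β j * p j)
    (heq : ∀ i, p i = ξ i / (δ i + ξ i))
    (k : Fin n) (hk : 0 < p k) :
    ∀ i, 0 < p i := by
  intro i
  induction hconn k i with
  | refl => exact hk
  | tail _ hedge ih =>
    exact sis_equilibrium_pos_of_edge hA hβ hδ (fun j => (hp j).1) hξ heq hedge ih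
end

section
/- In the concave game where node i's objective is f_i(p_i, p_{−i}) = −(δ_i/2)p_i² + p_i(1 − p_i/2) Σ_{j≠i} a_{ji} β_j p_j with δ_i > 0, β_j > 0, a_{ji} ≥ 0, and p ∈ [0,1]ⁿ, the function f_i is strictly concave in p_i for each fixed p_{−i} ∈ [0,1]^{n−1}, and the partial derivative ∂f_i/∂p_i evaluated at p equals the i-th component of the SIS vector field: −δ_i p_i + (1 − p_i) Σ_{j≠i} a_{ji} β_j p_j. -/
/-! Writing `S` for the weighted infection pressure on node `i`, the objective is the quadratic
`-((δ i + S) / 2) x² + S x`. Since `S ≥ 0` and `δ i > 0`, its leading coefficient is negative, which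
gives strict concavity, and its derivative `-(δ i + S) x + S` is the SIS vector field. -/

open Matrix Set Filter

theorem strictConcaveOn_quadratic {c : ℝ} (hc : c < 0) (b : ℝ) :
    StrictConcaveOn ℝ univ (fun x : ℝ => c * x ^ 2 + b * x) := by
  refine ⟨convex_univ, fun x _ y _ hxy s t hs ht hst => ?_⟩
  -- the concavity gap at `s x + t y` is exactly `-c s t (x - y)²`
  have hgap : 0 < -c * (s * t * (x - y) ^ 2) :=
    mul_pos (neg_pos.2 hc) (mul_pos (mul_pos hs ht) (pow_two_pos_of_ne_zero (sub_ne_zero.2 hxy)))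
  obtain rfl : t = 1 - s := by linarith
  simp only [smul_eq_mul]
  nlinarith

theorem hasDerivAt_quadratic (c b x : ℝ) :
    HasDerivAt (fun x : ℝ => c * x ^ 2 + b * x) (2 * c * x + b) x :=
  (((hasDerivAt_pow 2 x).const_mul c).add ((hasDerivAt_id' x).const_mul b)).congr_deriv
    (by push_cast; ring)

theorem stmt17 {n : ℕ} (A : Matrix (Fin n) (Fin n) ℝ) (hA : ∀ i j, 0 ≤ A i j)
    (β δ : Fin n → ℝ) (hβ : ∀ j, 0 < β j) (hδ : ∀ j, 0 < δ j)
    (i : Fin n) (p : Fin n → ℝ) (hp : ∀ j, p j ∈ Set.Icc (0:ℝ) 1)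
    (S : ℝ)
    (hS : S = ∑ j ∈ Finset.univ.filter (fun j => j ≠ i), A j i * β j * p j) :
    StrictConcaveOn ℝ Set.univ
      (fun x : ℝ => -(δ i / 2) * x ^ 2 + x * (1 - x / 2) * S) ∧
    ∀ x : ℝ, HasDerivAt
      (fun x : ℝ => -(δ i / 2) * x ^ 2 + x * (1 - x / 2) * S)
      (-(δ i) * x + (1 - x) * S) x := by
  have hS_nonneg : 0 ≤ S := hS ▸ Finset.sum_nonneg fun j _ =>
    mul_nonneg (mul_nonneg (hA j i) (hβ j).le) (hp j).1
  have hquad : (fun x : ℝ => -(δ i / 2) * x ^ 2 + x * (1 - x / 2) * S)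
      = fun x => -((δ i + S) / 2) * x ^ 2 + S * x := by
    funext x; ring
  refine ⟨hquad ▸ strictConcaveOn_quadratic (by linarith [hδ i]) S, fun x => ?_⟩
  rw [hquad]
  exact (hasDerivAt_quadratic _ S x).congr_deriv (by ring)
end

section
/- Let X be an n×n irreducible Metzler matrix with μ(X) = 0, let ν ≫ 0 satisfy Xν = 0 and ξ ≫ 0 satisfy Xᵀξ = 0, and let R = diag(ξ_i/ν_i). Then the symmetric matrix M = XᵀR + RX is Metzler, irreducible, and satisfies Mν = 0; consequently its largest eigenvalue is 0 and M is negative semidefinite. -/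
open Matrix Set Filter

/-!
Entrywise `M i j = X j i * r j + r i * X i j` with `r = ξ / ν > 0`, so `M` is symmetric,
Metzler, and nonzero off the diagonal wherever `X` is; and `M ν = Xᵀ ξ + R X ν = 0`.
Perron–Frobenius is not needed for the rest: for a Metzler matrix killing `ν` on both sides,
`vᵀ M v = -½ ∑ᵢⱼ Mᵢⱼ νᵢ νⱼ (vᵢ/νᵢ - vⱼ/νⱼ)² ≤ 0`. A complex eigenpair `(z, u)` then has
`Re z · ‖u‖² = Re (u* M u) = (Re u)ᵀ M (Re u) + (Im u)ᵀ M (Im u) ≤ 0`, and `ν` is a kernel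
vector, so the spectral abscissa is `0`.
-/

section RealQuadraticForm

variable {ι : Type*} [Fintype ι]

theorem Matrix.dotProduct_mulVec_eq_neg_half_sum (M : Matrix ι ι ℝ) {ν : ι → ℝ}
    (hν : ∀ i, ν i ≠ 0) (hMν : M *ᵥ ν = 0) (hνM : ν ᵥ* M = 0) (v : ι → ℝ) :
    v ⬝ᵥ (M *ᵥ v) =
      -(1 / 2) * ∑ i, ∑ j, M i j * ν i * ν j * (v i / ν i - v j / ν j) ^ 2 := by
  have hrow : ∀ i, ∑ j, M i j * ν j = 0 := fun i => congrFun hMν i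
  have hcol : ∀ j, ∑ i, ν i * M i j = 0 := fun j => congrFun hνM j
  have hexpand : ∀ i j, M i j * ν i * ν j * (v i / ν i - v j / ν j) ^ 2 =
      v i ^ 2 / ν i * (M i j * ν j) + v j ^ 2 / ν j * (ν i * M i j)
        - 2 * (v i * (M i j * v j)) := fun i j => by
    field_simp [hν i, hν j]; ring
  simp only [hexpand, Finset.sum_sub_distrib, Finset.sum_add_distrib, ← Finset.mul_sum]
  rw [Finset.sum_comm (f := fun i j => v j ^ 2 / ν j * (ν i * M i j))]
  simp only [← Finset.mul_sum, hrow, hcol, mul_zero, Finset.sum_const_zero]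
  simp only [dotProduct, mulVec]
  ring

theorem Matrix.dotProduct_mulVec_nonpos (M : Matrix ι ι ℝ)
    (hM : ∀ i j, i ≠ j → 0 ≤ M i j) {ν : ι → ℝ} (hν : ∀ i, 0 < ν i) (hMν : M *ᵥ ν = 0)
    (hνM : ν ᵥ* M = 0) (v : ι → ℝ) :
    v ⬝ᵥ (M *ᵥ v) ≤ 0 := by
  rw [M.dotProduct_mulVec_eq_neg_half_sum (fun i => (hν i).ne') hMν hνM]
  refine mul_nonpos_of_nonpos_of_nonneg (by norm_num) <|
    Finset.sum_nonneg fun i _ => Finset.sum_nonneg fun j _ => ?_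
  rcases eq_or_ne i j with rfl | hij
  · simp
  · have := hM i j hij
    have := hν i
    have := hν j
    positivity

theorem Matrix.re_star_dotProduct_map_ofReal_mulVec (M : Matrix ι ι ℝ) (u : ι → ℂ) :
    (star u ⬝ᵥ (M.map Complex.ofReal *ᵥ u)).re =
      (fun i => (u i).re) ⬝ᵥ (M *ᵥ fun i => (u i).re) +
        (fun i => (u i).im) ⬝ᵥ (M *ᵥ fun i => (u i).im) := by
  simp only [dotProduct, mulVec, Pi.star_apply, Complex.re_sum, Finset.mul_sum,
    map_apply, ← Finset.sum_add_distrib]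
  refine Finset.sum_congr rfl fun i _ => Finset.sum_congr rfl fun j _ => ?_
  simp [Complex.mul_re]

open scoped ComplexOrder in
theorem Matrix.re_nonpos_of_mem_spectrum_map_ofReal [DecidableEq ι] {M : Matrix ι ι ℝ}
    (hM : ∀ v : ι → ℝ, v ⬝ᵥ (M *ᵥ v) ≤ 0) {z : ℂ}
    (hz : z ∈ spectrum ℂ (M.map Complex.ofReal)) : z.re ≤ 0 := by
  rw [← spectrum_toLin', ← Module.End.hasEigenvalue_iff_mem_spectrum] at hz
  obtain ⟨u, hu⟩ := hz.exists_hasEigenvector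
  have heig : M.map Complex.ofReal *ᵥ u = z • u := by
    simpa using hu.apply_eq_smul
  obtain ⟨hnorm, hnorm_im⟩ := Complex.pos_iff.mp (dotProduct_star_self_pos_iff.mpr hu.2)
  have hre : (star u ⬝ᵥ (M.map Complex.ofReal *ᵥ u)).re = z.re * (star u ⬝ᵥ u).re := by
    rw [heig, dotProduct_smul, smul_eq_mul, Complex.mul_re, ← hnorm_im, mul_zero, sub_zero]
  rw [M.re_star_dotProduct_map_ofReal_mulVec] at hre
  nlinarith [hM fun i => (u i).re, hM fun i => (u i).im]

theorem Matrix.zero_mem_spectrum_map_ofReal [DecidableEq ι] {M : Matrix ι ι ℝ} {ν : ι → ℝ}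
    (hν : ν ≠ 0) (hMν : M *ᵥ ν = 0) : (0 : ℂ) ∈ spectrum ℂ (M.map Complex.ofReal) := by
  rw [← spectrum_toLin', ← Module.End.hasEigenvalue_iff_mem_spectrum]
  refine Module.End.hasEigenvalue_of_hasEigenvector
    (Module.End.hasEigenvector_iff.mpr ⟨?_, fun h => hν ?_⟩) (x := fun i => (ν i : ℂ))
  · rw [Module.End.mem_eigenspace_iff, toLin'_apply, zero_smul]
    ext i
    simpa [mulVec, dotProduct] using congrArg Complex.ofReal (congrFun hMν i)
  · ext i
    simpa using congrFun h i

end RealQuadraticForm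

theorem matSpec_eq_empty (M : Matrix (Fin 0) (Fin 0) ℝ) : matSpec M = ∅ :=
  Set.eq_empty_of_forall_notMem fun _ hz => hz (isUnit_of_subsingleton _)

theorem spectralAbscissa_eq_zero_of_dotProduct_mulVec_nonpos {n : ℕ}
    {M : Matrix (Fin n) (Fin n) ℝ} {ν : Fin n → ℝ} (hν : ∀ i, 0 < ν i) (hMν : M *ᵥ ν = 0)
    (hM : ∀ v : Fin n → ℝ, v ⬝ᵥ (M *ᵥ v) ≤ 0) :
    spectralAbscissa M = 0 := by
  rcases n with _ | n
  · simp [spectralAbscissa, matSpec_eq_empty]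
  have h0 : (0 : ℂ) ∈ matSpec M :=
    M.zero_mem_spectrum_map_ofReal (fun h => (hν 0).ne' (congrFun h 0)) hMν
  have hbdd : ∀ x ∈ Complex.re '' matSpec M, x ≤ 0 := by
    rintro _ ⟨z, hz, rfl⟩
    exact M.re_nonpos_of_mem_spectrum_map_ofReal hM hz
  exact le_antisymm (Real.sSup_nonpos hbdd) (le_csSup ⟨0, hbdd⟩ ⟨0, h0, rfl⟩)

section Symmetrization

variable {n : ℕ} (X : Matrix (Fin n) (Fin n) ℝ) (d : Fin n → ℝ)

theorem transpose_mul_diagonal_add_diagonal_mul_apply (i j : Fin n) :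
    (Xᵀ * diagonal d + diagonal d * X) i j = X j i * d j + d i * X i j := by
  simp [mul_diagonal, diagonal_mul]

theorem isSymm_transpose_mul_diagonal_add_diagonal_mul :
    (Xᵀ * diagonal d + diagonal d * X).IsSymm :=
  IsSymm.ext fun i j => by
    simp only [transpose_mul_diagonal_add_diagonal_mul_apply]
    ring

variable {X d}

theorem IsMetzler.transpose_mul_diagonal_add_diagonal_mul_s18 (hX : IsMetzler X)
    (hd : ∀ i, 0 ≤ d i) : IsMetzler (Xᵀ * diagonal d + diagonal d * X) := fun i j hij => by
  rw [transpose_mul_diagonal_add_diagonal_mul_apply]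
  exact add_nonneg (mul_nonneg (hX j i hij.symm) (hd j)) (mul_nonneg (hd i) (hX i j hij))

theorem MatIrreducible.transpose_mul_diagonal_add_diagonal_mul_s18 (hX : IsMetzler X)
    (hI : MatIrreducible X) (hd : ∀ i, 0 < d i) :
    MatIrreducible (Xᵀ * diagonal d + diagonal d * X) := fun S hS hSu => by
  obtain ⟨i, hi, j, hj, hij⟩ := hI S hS hSu
  have hne : i ≠ j := ne_of_mem_of_not_mem hi hj
  refine ⟨i, hi, j, hj, ?_⟩
  rw [transpose_mul_diagonal_add_diagonal_mul_apply]
  have := mul_pos (hd i) ((hX i j hne).lt_of_ne' hij)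
  have := mul_nonneg (hX j i hne.symm) (hd j).le
  positivity

end Symmetrization

theorem stmt18_general {n : ℕ} (X : Matrix (Fin n) (Fin n) ℝ) (hM : IsMetzler X)
    (hI : MatIrreducible X)
    (ν ξ : Fin n → ℝ) (hν : ∀ i, 0 < ν i) (hξ : ∀ i, 0 < ξ i)
    (hXν : X *ᵥ ν = 0) (hXξ : Xᵀ *ᵥ ξ = 0)
    (R M : Matrix (Fin n) (Fin n) ℝ)
    (hR : R = Matrix.diagonal (fun i => ξ i / ν i))
    (hMdef : M = Xᵀ * R + R * X) :
    IsMetzler M ∧ MatIrreducible M ∧ M *ᵥ ν = 0 ∧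
      spectralAbscissa M = 0 ∧ ∀ v : Fin n → ℝ, v ⬝ᵥ (M *ᵥ v) ≤ 0 := by
  subst hR
  have hd : ∀ i, 0 < ξ i / ν i := fun i => div_pos (hξ i) (hν i)
  have hdν : diagonal (fun i => ξ i / ν i) *ᵥ ν = ξ := funext fun i => by
    simp [mulVec_diagonal, div_mul_cancel₀ _ (hν i).ne']
  have hMν : M *ᵥ ν = 0 := by
    rw [hMdef, add_mulVec, ← mulVec_mulVec, ← mulVec_mulVec, hdν, hXξ, hXν, mulVec_zero,
      add_zero]
  have hνM : ν ᵥ* M = 0 := by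
    rw [← mulVec_transpose, hMdef, isSymm_transpose_mul_diagonal_add_diagonal_mul, ← hMdef,
      hMν]
  have hMet : IsMetzler M :=
    hMdef ▸ hM.transpose_mul_diagonal_add_diagonal_mul_s18 fun i => (hd i).le
  have hquad := dotProduct_mulVec_nonpos M hMet hν hMν hνM
  exact ⟨hMet, hMdef ▸ hI.transpose_mul_diagonal_add_diagonal_mul_s18 hM hd, hMν,
    spectralAbscissa_eq_zero_of_dotProduct_mulVec_nonpos hν hMν hquad, hquad⟩

theorem stmt18 {n : ℕ} (X : Matrix (Fin n) (Fin n) ℝ) (hM : IsMetzler X)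
    (hI : MatIrreducible X) (hμ : spectralAbscissa X = 0)
    (ν ξ : Fin n → ℝ) (hν : ∀ i, 0 < ν i) (hξ : ∀ i, 0 < ξ i)
    (hXν : X *ᵥ ν = 0) (hXξ : Xᵀ *ᵥ ξ = 0)
    (R M : Matrix (Fin n) (Fin n) ℝ)
    (hR : R = Matrix.diagonal (fun i => ξ i / ν i))
    (hMdef : M = Xᵀ * R + R * X) :
    IsMetzler M ∧ MatIrreducible M ∧ M *ᵥ ν = 0 ∧
      spectralAbscissa M = 0 ∧ ∀ v : Fin n → ℝ, v ⬝ᵥ (M *ᵥ v) ≤ 0 :=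
  stmt18_general X hM hI ν ξ hν hξ hXν hXξ R M hR hMdef
end
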